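/- arXiv:math-ph/0311003 — 3 statements merged into one kernel-verified Lean document; each statement's English description precedes it below -/
import Mathlib

section
/- Lie derivative commutes with jet prolongation: for a projectable vector field (Ξ, ξ) and a section γ, the s-jet prolongation of the Lie derivative equals the Lie derivative (with respect to the prolonged vector field j_s Ξ) of the prolonged section: j_s(£_Ξ γ) = £_{j_s Ξ}(j_s γ), under the canonical identification V J_s Y ≅ J_s V Y. (It suffices to verify this in coordinates for s = 1.) -/
/-!
Differentiating `ξ^μ ∂_μ γ^i` by the Leibniz rule gives `ξ^μ ∂_σ ∂_μ γ^i + ∂_μ γ^i ∂_σ ξ^μ`, and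
differentiating `Ξ^i(x, γ x)` along the graph of `γ` gives `∂_σ Ξ^i + ∂_σ γ^j ∂_{y^j} Ξ^i` by the
chain rule. Symmetry of the second derivatives of `γ` turns `∂_σ ∂_μ` into `∂_μ ∂_σ`, and the two
sides then agree term by term.
-/

noncomputable def pd {n : ℕ} (σ : Fin n) (g : (Fin n → ℝ) → ℝ) : (Fin n → ℝ) → ℝ :=
  fun x => fderiv ℝ g x (Pi.single σ 1)

section PartialDerivative

variable {n : ℕ} {f g : (Fin n → ℝ) → ℝ} {x : Fin n → ℝ}

theorem pd_sub (hf : DifferentiableAt ℝ f x) (hg : DifferentiableAt ℝ g x) (σ : Fin n) :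
    pd σ (fun z => f z - g z) x = pd σ f x - pd σ g x := by
  simp [pd, fderiv_fun_sub hf hg]

theorem pd_mul (hf : DifferentiableAt ℝ f x) (hg : DifferentiableAt ℝ g x) (σ : Fin n) :
    pd σ (fun z => f z * g z) x = f x * pd σ g x + g x * pd σ f x := by
  simp [pd, fderiv_fun_mul hf hg]

theorem pd_sum {ι : Type*} {s : Finset ι} {F : ι → (Fin n → ℝ) → ℝ}
    (hF : ∀ μ ∈ s, DifferentiableAt ℝ (F μ) x) (σ : Fin n) :
    pd σ (fun z => ∑ μ ∈ s, F μ z) x = ∑ μ ∈ s, pd σ (F μ) x := by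
  simp [pd, fderiv_fun_sum hF]

theorem ContDiffAt.differentiableAt_pd (hg : ContDiffAt ℝ 2 g x) (μ : Fin n) :
    DifferentiableAt ℝ (pd μ g) x :=
  ((hg.fderiv_right (m := 1) (by norm_num)).differentiableAt one_ne_zero).clm_apply
    (differentiableAt_const _)

theorem pd_pd_apply (hg : ContDiffAt ℝ 2 g x) (σ μ : Fin n) :
    pd σ (pd μ g) x = fderiv ℝ (fderiv ℝ g) x (Pi.single σ 1) (Pi.single μ 1) := by
  have hdg := (hg.fderiv_right (m := 1) (by norm_num)).differentiableAt one_ne_zero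
  change fderiv ℝ (fun z => fderiv ℝ g z (Pi.single μ 1)) x (Pi.single σ 1) = _
  simp [fderiv_clm_apply hdg (differentiableAt_const _)]

theorem pd_pd_comm (hg : ContDiffAt ℝ 2 g x) (σ μ : Fin n) :
    pd σ (pd μ g) x = pd μ (pd σ g) x := by
  rw [pd_pd_apply hg, pd_pd_apply hg]
  exact hg.isSymmSndFDerivAt (by simp) _ _

theorem pd_apply {m : ℕ} {γ : (Fin n → ℝ) → Fin m → ℝ} (hγ : DifferentiableAt ℝ γ x)
    (σ : Fin n) (j : Fin m) :
    pd σ (fun z => γ z j) x = fderiv ℝ γ x (Pi.single σ 1) j := by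
  simp [pd, fderiv_apply hγ]

end PartialDerivative

theorem ContinuousLinearMap.apply_prod_eq_add_sum {E : Type*} [AddCommMonoid E] [Module ℝ E]
    [TopologicalSpace E] {m : ℕ} (L : E × (Fin m → ℝ) →L[ℝ] ℝ) (a : E) (v : Fin m → ℝ) :
    L (a, v) = L (a, 0) + ∑ j, v j * L (0, Pi.single j 1) := by
  have hdecomp : (a, v) = (a, 0) + ∑ j, v j • ((0 : E), (Pi.single j 1 : Fin m → ℝ)) :=
    Prod.ext (by simp [Prod.fst_sum]) (by simpa [Prod.snd_sum] using pi_eq_sum_univ' v)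
  rw [hdecomp]
  simp only [map_add, map_sum, map_smul, smul_eq_mul]

theorem pd_comp_graph {n m : ℕ} {F : (Fin n → ℝ) × (Fin m → ℝ) → ℝ}
    {γ : (Fin n → ℝ) → Fin m → ℝ} {x : Fin n → ℝ} (hF : DifferentiableAt ℝ F (x, γ x))
    (hγ : DifferentiableAt ℝ γ x) (σ : Fin n) :
    pd σ (fun z => F (z, γ z)) x
      = fderiv ℝ F (x, γ x) (Pi.single σ 1, 0)
        + ∑ j, pd σ (fun z => γ z j) x * fderiv ℝ F (x, γ x) (0, Pi.single j 1) := by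
  have hchain : pd σ (fun z => F (z, γ z)) x
      = fderiv ℝ F (x, γ x) (Pi.single σ 1, fderiv ℝ γ x (Pi.single σ 1)) := by
    rw [pd, fderiv_fun_comp x hF (differentiableAt_fun_id.prodMk hγ),
      DifferentiableAt.fderiv_prodMk differentiableAt_fun_id hγ]
    simp
  simp only [hchain, pd_apply hγ]
  exact (fderiv ℝ F (x, γ x)).apply_prod_eq_add_sum _ _

theorem pd_sum_mul_pd {n : ℕ} {ξ : (Fin n → ℝ) → Fin n → ℝ} {g : (Fin n → ℝ) → ℝ}
    {x : Fin n → ℝ} (hξ : DifferentiableAt ℝ ξ x) (hg : ContDiffAt ℝ 2 g x) (σ : Fin n) :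
    pd σ (fun z => ∑ μ, ξ z μ * pd μ g z) x
      = ∑ μ, ξ x μ * pd μ (pd σ g) x + ∑ μ, pd μ g x * pd σ (fun z => ξ z μ) x := by
  rw [pd_sum (F := fun μ z => ξ z μ * pd μ g z)
      fun μ _ => (differentiableAt_pi.mp hξ μ).mul (hg.differentiableAt_pd μ),
    ← Finset.sum_add_distrib]
  refine Finset.sum_congr rfl fun μ _ => ?_
  rw [pd_mul (differentiableAt_pi.mp hξ μ) (hg.differentiableAt_pd μ), pd_pd_comm hg]

/-- coordinate form, `s = 1`: Lie derivative commutes with jet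
prolongation, `j₁(£_Ξ γ) = £_{j₁Ξ}(j₁γ)`.  On a trivial bundle `ℝⁿ × ℝᵐ → ℝⁿ`,
with `(£_Ξ γ)^i = ξ^σ ∂_σ γ^i − Ξ^i(x, γ)`, the `(i,σ)`-component of `j₁(£_Ξ γ)`
is `∂_σ((£_Ξ γ)^i)`, while the `(i,σ)`-component of `£_{j₁Ξ}(j₁γ)` is
`ξ^μ ∂_μ ∂_σ γ^i − Ξ^i_σ(j₁γ)`, where
`Ξ^i_σ = D_σ Ξ^i − y^i_μ ∂_σ ξ^μ = ∂_σ Ξ^i + y^j_σ ∂_{y^j} Ξ^i − y^i_μ ∂_σ ξ^μ`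
is the `(i,σ)`-component of the first prolongation `j₁Ξ`; the statement is that
these coincide. -/
theorem lie_derivative_commutes_with_prolongation {n m : ℕ}
    (ξ : (Fin n → ℝ) → Fin n → ℝ) (hξ : ContDiff ℝ (⊤ : ℕ∞) ξ)
    (Ξ : (Fin n → ℝ) × (Fin m → ℝ) → Fin m → ℝ) (hΞ : ContDiff ℝ (⊤ : ℕ∞) Ξ)
    (γ : (Fin n → ℝ) → Fin m → ℝ) (hγ : ContDiff ℝ (⊤ : ℕ∞) γ)
    (x : Fin n → ℝ) (σ : Fin n) (i : Fin m) :
    pd σ (fun z => (∑ μ, ξ z μ * pd μ (fun w => γ w i) z) - Ξ (z, γ z) i) x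
      = (∑ μ, ξ x μ * pd μ (fun z => pd σ (fun w => γ w i) z) x)
        - (fderiv ℝ (fun q : (Fin n → ℝ) × (Fin m → ℝ) => Ξ q i) (x, γ x)
             (Pi.single σ 1, 0)
           + (∑ j, pd σ (fun z => γ z j) x
               * fderiv ℝ (fun q : (Fin n → ℝ) × (Fin m → ℝ) => Ξ q i) (x, γ x)
                   (0, Pi.single j 1))
           - ∑ μ, pd μ (fun w => γ w i) x * pd σ (fun z => ξ z μ) x) := by
  have hξx : DifferentiableAt ℝ ξ x := hξ.differentiable (by simp) x
  have hγx : DifferentiableAt ℝ γ x := hγ.differentiable (by simp) x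
  have hγi : ContDiffAt ℝ 2 (fun w => γ w i) x :=
    (contDiff_pi.mp hγ i).contDiffAt.of_le (by norm_cast)
  have hΞi : DifferentiableAt ℝ (fun q => Ξ q i) (x, γ x) :=
    differentiableAt_pi.mp (hΞ.differentiable (by simp) _) i
  have htransport : DifferentiableAt ℝ (fun z => ∑ μ, ξ z μ * pd μ (fun w => γ w i) z) x :=
    DifferentiableAt.fun_sum fun μ _ =>
      (differentiableAt_pi.mp hξx μ).mul (hγi.differentiableAt_pd μ)
  have hgraph : DifferentiableAt ℝ (fun z => Ξ (z, γ z) i) x :=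
    hΞi.comp (f := fun z => (z, γ z)) x (differentiableAt_fun_id.prodMk hγx)
  rw [pd_sub htransport hgraph, pd_sum_mul_pd hξx hγi, pd_comp_graph hΞi hγx]
  ring
end

section
/- The first-order Euler–Lagrange expression vanishes identically in the jet variables if and only if the Lagrangian is a total divergence: for a first-order Lagrangian density L(x, y, y_σ) in one independent variable (n = 1) and one dependent variable (m = 1), E(L) := ∂_y L − D_x(∂_{y_x} L) = 0 as a function on the 2-jet space if and only if there exists a function f(x, y) with L = D_x f = ∂_x f + y_x ∂_y f. -/
/-- Partial derivative in `x` of a function of the jet variables `(x, y, y_x)`. -/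
noncomputable def pX (g : ℝ × ℝ × ℝ → ℝ) (p : ℝ × ℝ × ℝ) : ℝ := fderiv ℝ g p (1, 0, 0)

/-- Partial derivative in `y`. -/
noncomputable def pY (g : ℝ × ℝ × ℝ → ℝ) (p : ℝ × ℝ × ℝ) : ℝ := fderiv ℝ g p (0, 1, 0)

/-- Partial derivative in `y_x`. -/
noncomputable def pYx (g : ℝ × ℝ × ℝ → ℝ) (p : ℝ × ℝ × ℝ) : ℝ := fderiv ℝ g p (0, 0, 1)

/-- The Euler–Lagrange expression `E(L) = ∂_y L − D_x(∂_{y_x} L)` of a first-order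
Lagrangian `L(x, y, y_x)` (with `n = m = 1`), as a function of the 2-jet
variables `(x, y, y_x, y_{xx})`, where `D_x = ∂_x + y_x ∂_y + y_{xx} ∂_{y_x}`. -/
noncomputable def EL (L : ℝ × ℝ × ℝ → ℝ) (x y yx yxx : ℝ) : ℝ :=
  pY L (x, y, yx) -
    (pX (fun p => pYx L p) (x, y, yx) + yx * pY (fun p => pYx L p) (x, y, yx)
      + yxx * pYx (fun p => pYx L p) (x, y, yx))

open ContDiff intervalIntegral MeasureTheory Set Metric

lemma one_le_inf : ((⊤ : ℕ∞) : WithTop ℕ∞) ≠ 0 := by simp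

/-! ### Derivative computations for Lagrangians affine in `y_x` -/

noncomputable def pr12 : ℝ × ℝ × ℝ →L[ℝ] ℝ × ℝ :=
  (ContinuousLinearMap.fst ℝ ℝ (ℝ × ℝ)).prod
    ((ContinuousLinearMap.fst ℝ ℝ ℝ).comp (ContinuousLinearMap.snd ℝ ℝ (ℝ × ℝ)))
noncomputable def pr3 : ℝ × ℝ × ℝ →L[ℝ] ℝ :=
  (ContinuousLinearMap.snd ℝ ℝ ℝ).comp (ContinuousLinearMap.snd ℝ ℝ (ℝ × ℝ))

lemma hasF_comp12 (B : ℝ × ℝ → ℝ) (hB : Differentiable ℝ B) (p : ℝ × ℝ × ℝ) :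
    HasFDerivAt (fun p : ℝ × ℝ × ℝ => B (p.1, p.2.1))
      ((fderiv ℝ B (p.1, p.2.1)).comp pr12) p :=
  ((hB (p.1, p.2.1)).hasFDerivAt).comp p pr12.hasFDerivAt

lemma hasF_Lform (A B : ℝ × ℝ → ℝ) (hA : Differentiable ℝ A) (hB : Differentiable ℝ B)
    (p : ℝ × ℝ × ℝ) :
    HasFDerivAt (fun p : ℝ × ℝ × ℝ => A (p.1, p.2.1) + p.2.2 * B (p.1, p.2.1))
      ((fderiv ℝ A (p.1, p.2.1)).comp pr12 +
        (p.2.2 • (fderiv ℝ B (p.1, p.2.1)).comp pr12 + B (p.1, p.2.1) • pr3)) p :=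
  (hasF_comp12 A hA p).add (pr3.hasFDerivAt.mul (hasF_comp12 B hB p))

lemma fderiv_Lform (A B : ℝ × ℝ → ℝ) (hA : Differentiable ℝ A) (hB : Differentiable ℝ B)
    (p : ℝ × ℝ × ℝ) (u : ℝ × ℝ × ℝ) :
    fderiv ℝ (fun p : ℝ × ℝ × ℝ => A (p.1, p.2.1) + p.2.2 * B (p.1, p.2.1)) p u
      = fderiv ℝ A (p.1, p.2.1) (u.1, u.2.1) + p.2.2 * fderiv ℝ B (p.1, p.2.1) (u.1, u.2.1)
        + B (p.1, p.2.1) * u.2.2 := by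
  rw [(hasF_Lform A B hA hB p).fderiv]
  simp [pr12, pr3]
  ring

lemma fderiv_comp12 (B : ℝ × ℝ → ℝ) (hB : Differentiable ℝ B) (p : ℝ × ℝ × ℝ) (u : ℝ × ℝ × ℝ) :
    fderiv ℝ (fun p : ℝ × ℝ × ℝ => B (p.1, p.2.1)) p u
      = fderiv ℝ B (p.1, p.2.1) (u.1, u.2.1) := by
  rw [(hasF_comp12 B hB p).fderiv]; simp [pr12]

lemma pYx_Lform (A B : ℝ × ℝ → ℝ) (hA : Differentiable ℝ A) (hB : Differentiable ℝ B) :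
    (fun p : ℝ × ℝ × ℝ =>
        pYx (fun p : ℝ × ℝ × ℝ => A (p.1, p.2.1) + p.2.2 * B (p.1, p.2.1)) p)
      = fun p : ℝ × ℝ × ℝ => B (p.1, p.2.1) := by
  funext p
  rw [pYx, fderiv_Lform A B hA hB]
  simp [Prod.mk_zero_zero]

lemma EL_form (A B : ℝ × ℝ → ℝ) (hA : Differentiable ℝ A) (hB : Differentiable ℝ B)
    (x y yx yxx : ℝ) :
    EL (fun p : ℝ × ℝ × ℝ => A (p.1, p.2.1) + p.2.2 * B (p.1, p.2.1)) x y yx yxx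
      = fderiv ℝ A (x, y) (0, 1) - fderiv ℝ B (x, y) (1, 0) := by
  rw [EL, pYx_Lform A B hA hB, pY, pX, pY, pYx,
    fderiv_Lform A B hA hB, fderiv_comp12 B hB, fderiv_comp12 B hB, fderiv_comp12 B hB]
  norm_num [Prod.mk_zero_zero]
  try ring

/-! ### Constancy in the `y_x` direction -/

lemma const_dir (M : ℝ × ℝ × ℝ → ℝ) (hM : ContDiff ℝ (⊤ : ℕ∞) M)
    (h0 : ∀ p : ℝ × ℝ × ℝ, fderiv ℝ M p (0, 0, 1) = 0) (x y t : ℝ) :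
    M (x, y, t) = M (x, y, 0) := by
  have hc : ∀ s : ℝ, HasDerivAt (fun s : ℝ => (x, y, s)) ((0 : ℝ), (0 : ℝ), (1 : ℝ)) s := by
    intro s
    exact (hasDerivAt_const s x).prodMk ((hasDerivAt_const s y).prodMk (hasDerivAt_id s))
  have hψ : ∀ s : ℝ, HasDerivAt (fun s : ℝ => M (x, y, s)) 0 s := by
    intro s
    have := ((hM.differentiable one_le_inf (x, y, s)).hasFDerivAt).comp_hasDerivAt s (hc s)
    rwa [h0 (x, y, s)] at this
  exact is_const_of_deriv_eq_zero (fun s => (hψ s).differentiableAt)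
    (fun s => (hψ s).deriv) t 0

/-! ### The homotopy-formula (Poincaré lemma) construction -/

noncomputable def Fint (A B : ℝ × ℝ → ℝ) (v : ℝ × ℝ) (t : ℝ) : ℝ :=
  v.1 * A (t • v) + v.2 * B (t • v)

noncomputable def Fint' (A B : ℝ × ℝ → ℝ) (v : ℝ × ℝ) (t : ℝ) : (ℝ × ℝ) →L[ℝ] ℝ :=
  (v.1 • ((fderiv ℝ A (t • v)).comp (t • ContinuousLinearMap.id ℝ (ℝ × ℝ)))
      + A (t • v) • ContinuousLinearMap.fst ℝ ℝ ℝ)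
    + (v.2 • ((fderiv ℝ B (t • v)).comp (t • ContinuousLinearMap.id ℝ (ℝ × ℝ)))
      + B (t • v) • ContinuousLinearMap.snd ℝ ℝ ℝ)

lemma Fint'_apply (A B : ℝ × ℝ → ℝ) (v : ℝ × ℝ) (t : ℝ) (u : ℝ × ℝ) :
    Fint' A B v t u = v.1 * fderiv ℝ A (t • v) (t • u) + A (t • v) * u.1
      + (v.2 * fderiv ℝ B (t • v) (t • u) + B (t • v) * u.2) := by
  simp [Fint']

lemma hasF_Fint (A B : ℝ × ℝ → ℝ) (hA : ContDiff ℝ (⊤ : ℕ∞) A) (hB : ContDiff ℝ (⊤ : ℕ∞) B)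
    (t : ℝ) (v : ℝ × ℝ) :
    HasFDerivAt (fun w => Fint A B w t) (Fint' A B v t) v := by
  have hs : HasFDerivAt (fun w : ℝ × ℝ => t • w)
      (t • ContinuousLinearMap.id ℝ (ℝ × ℝ)) v :=
    (t • ContinuousLinearMap.id ℝ (ℝ × ℝ)).hasFDerivAt
  have hAt : HasFDerivAt (fun w : ℝ × ℝ => A (t • w))
      ((fderiv ℝ A (t • v)).comp (t • ContinuousLinearMap.id ℝ (ℝ × ℝ))) v :=
    ((hA.differentiable one_le_inf (t • v)).hasFDerivAt).comp v hs
  have hBt : HasFDerivAt (fun w : ℝ × ℝ => B (t • w))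
      ((fderiv ℝ B (t • v)).comp (t • ContinuousLinearMap.id ℝ (ℝ × ℝ))) v :=
    ((hB.differentiable one_le_inf (t • v)).hasFDerivAt).comp v hs
  exact (hasFDerivAt_fst.mul hAt).add (hasFDerivAt_snd.mul hBt)

lemma cont_Fint' (A B : ℝ × ℝ → ℝ) (hA : ContDiff ℝ (⊤ : ℕ∞) A) (hB : ContDiff ℝ (⊤ : ℕ∞) B) :
    Continuous (fun q : (ℝ × ℝ) × ℝ => Fint' A B q.1 q.2) := by
  have hsm : Continuous (fun q : (ℝ × ℝ) × ℝ => q.2 • q.1) :=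
    continuous_snd.smul continuous_fst
  have hscale : Continuous (fun q : (ℝ × ℝ) × ℝ => q.2 • ContinuousLinearMap.id ℝ (ℝ × ℝ)) :=
    continuous_snd.smul continuous_const
  have hdA : Continuous (fun q : (ℝ × ℝ) × ℝ => (fderiv ℝ A (q.2 • q.1)).comp
      (q.2 • ContinuousLinearMap.id ℝ (ℝ × ℝ))) :=
    ((hA.continuous_fderiv one_le_inf).comp hsm).clm_comp hscale
  have hdB : Continuous (fun q : (ℝ × ℝ) × ℝ => (fderiv ℝ B (q.2 • q.1)).comp
      (q.2 • ContinuousLinearMap.id ℝ (ℝ × ℝ))) :=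
    ((hB.continuous_fderiv one_le_inf).comp hsm).clm_comp hscale
  exact ((continuous_fst.fst.smul hdA).add ((hA.continuous.comp hsm).smul continuous_const)).add
    ((continuous_fst.snd.smul hdB).add ((hB.continuous.comp hsm).smul continuous_const))

noncomputable def fPoin (A B : ℝ × ℝ → ℝ) (v : ℝ × ℝ) : ℝ := ∫ t in (0:ℝ)..1, Fint A B v t

lemma cont_Fint_t (A B : ℝ × ℝ → ℝ) (hA : ContDiff ℝ (⊤ : ℕ∞) A) (hB : ContDiff ℝ (⊤ : ℕ∞) B)
    (x : ℝ × ℝ) : Continuous (fun t => Fint A B x t) := by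
  have h1 : Continuous (fun t : ℝ => t • x) := continuous_id.smul continuous_const
  exact (continuous_const.mul (hA.continuous.comp h1)).add
    (continuous_const.mul (hB.continuous.comp h1))

lemma hasF_fPoin (A B : ℝ × ℝ → ℝ) (hA : ContDiff ℝ (⊤ : ℕ∞) A) (hB : ContDiff ℝ (⊤ : ℕ∞) B)
    (v : ℝ × ℝ) :
    HasFDerivAt (fPoin A B) (∫ t in (0:ℝ)..1, Fint' A B v t) v := by
  obtain ⟨C, hC⟩ :=
    ((isCompact_closedBall v 1).prod (isCompact_Icc (a := (0:ℝ)) (b := 1))).exists_bound_of_continuousOn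
      ((cont_Fint' A B hA hB).continuousOn)
  apply intervalIntegral.hasFDerivAt_integral_of_dominated_of_fderiv_le
    (s := ball v 1) (bound := fun _ => C) (ball_mem_nhds v one_pos)
  · exact Filter.Eventually.of_forall fun x => (cont_Fint_t A B hA hB x).aestronglyMeasurable
  · exact (cont_Fint_t A B hA hB v).intervalIntegrable _ _
  · exact ((cont_Fint' A B hA hB).comp
      (continuous_const.prodMk continuous_id)).aestronglyMeasurable
  · refine MeasureTheory.ae_of_all _ fun t ht x hx => ?_
    rw [uIoc_of_le zero_le_one] at ht
    exact hC (x, t) ⟨ball_subset_closedBall hx, ⟨ht.1.le, ht.2⟩⟩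
  · exact intervalIntegrable_const
  · exact MeasureTheory.ae_of_all _ fun t _ x _ => hasF_Fint A B hA hB t x

noncomputable def ellP (A B : ℝ × ℝ → ℝ) (v : ℝ × ℝ) : (ℝ × ℝ) →L[ℝ] ℝ :=
  A v • ContinuousLinearMap.fst ℝ ℝ ℝ + B v • ContinuousLinearMap.snd ℝ ℝ ℝ

lemma apply_decomp (φ : (ℝ × ℝ) →L[ℝ] ℝ) (w : ℝ × ℝ) :
    φ w = w.1 * φ (1, 0) + w.2 * φ (0, 1) := by
  conv_lhs => rw [show w = w.1 • ((1:ℝ), (0:ℝ)) + w.2 • ((0:ℝ), (1:ℝ)) by simp [Prod.ext_iff]]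
  rw [map_add, φ.map_smul, φ.map_smul, smul_eq_mul, smul_eq_mul]

lemma smul_apply_eq (φ : (ℝ × ℝ) →L[ℝ] ℝ) (t : ℝ) (u : ℝ × ℝ) :
    φ (t • u) = t * φ u := by rw [φ.map_smul, smul_eq_mul]

lemma integral_Fint' (A B : ℝ × ℝ → ℝ) (hA : ContDiff ℝ (⊤ : ℕ∞) A)
    (hB : ContDiff ℝ (⊤ : ℕ∞) B)
    (hclosed : ∀ v : ℝ × ℝ, fderiv ℝ A v (0, 1) = fderiv ℝ B v (1, 0)) (v : ℝ × ℝ) :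
    ∫ t in (0:ℝ)..1, Fint' A B v t = ellP A B v := by
  have hIc : Continuous (fun t => Fint' A B v t) :=
    (cont_Fint' A B hA hB).comp (continuous_const.prodMk continuous_id)
  have hInt : IntervalIntegrable (fun t => Fint' A B v t) volume 0 1 :=
    hIc.intervalIntegrable _ _
  have ev : ∀ u : ℝ × ℝ, (∫ t in (0:ℝ)..1, Fint' A B v t) u
      = ∫ t in (0:ℝ)..1, Fint' A B v t u :=
    fun u => ContinuousLinearMap.intervalIntegral_apply hInt u
  have hsm : ∀ t : ℝ, HasDerivAt (fun t : ℝ => t • v) v t := fun t => by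
    simpa using (hasDerivAt_id t).smul_const v
  have hDA : ∀ t : ℝ, HasDerivAt (fun t : ℝ => t * A (t • v)) (Fint' A B v t (1, 0)) t := by
    intro t
    have hAc : HasDerivAt (fun t : ℝ => A (t • v)) (fderiv ℝ A (t • v) v) t :=
      ((hA.differentiable one_le_inf (t • v)).hasFDerivAt).comp_hasDerivAt t (hsm t)
    have h : HasDerivAt (fun t : ℝ => t * A (t • v))
        (1 * A (t • v) + id t * fderiv ℝ A (t • v) v) t := (hasDerivAt_id t).mul hAc
    convert h using 1
    rw [Fint'_apply, smul_apply_eq, smul_apply_eq, apply_decomp (fderiv ℝ A (t • v)) v, hclosed]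
    simp only [id_eq]
    ring
  have hDB : ∀ t : ℝ, HasDerivAt (fun t : ℝ => t * B (t • v)) (Fint' A B v t (0, 1)) t := by
    intro t
    have hBc : HasDerivAt (fun t : ℝ => B (t • v)) (fderiv ℝ B (t • v) v) t :=
      ((hB.differentiable one_le_inf (t • v)).hasFDerivAt).comp_hasDerivAt t (hsm t)
    have h : HasDerivAt (fun t : ℝ => t * B (t • v))
        (1 * B (t • v) + id t * fderiv ℝ B (t • v) v) t := (hasDerivAt_id t).mul hBc
    convert h using 1
    rw [Fint'_apply, smul_apply_eq, smul_apply_eq, apply_decomp (fderiv ℝ B (t • v)) v, hclosed]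
    simp only [id_eq]
    ring
  have i10 : (∫ t in (0:ℝ)..1, Fint' A B v t) (1, 0) = A v := by
    rw [ev]
    rw [intervalIntegral.integral_eq_sub_of_hasDerivAt (fun t _ => hDA t)
      ((hIc.clm_apply continuous_const).intervalIntegrable _ _)]
    simp
  have i01 : (∫ t in (0:ℝ)..1, Fint' A B v t) (0, 1) = B v := by
    rw [ev]
    rw [intervalIntegral.integral_eq_sub_of_hasDerivAt (fun t _ => hDB t)
      ((hIc.clm_apply continuous_const).intervalIntegrable _ _)]
    simp
  apply ContinuousLinearMap.ext
  intro u
  rw [apply_decomp _ u, i10, i01, apply_decomp (ellP A B v) u]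
  simp [ellP]

lemma poincare (A B : ℝ × ℝ → ℝ) (hA : ContDiff ℝ (⊤ : ℕ∞) A) (hB : ContDiff ℝ (⊤ : ℕ∞) B)
    (hclosed : ∀ v : ℝ × ℝ, fderiv ℝ A v (0, 1) = fderiv ℝ B v (1, 0)) :
    ∃ f : ℝ × ℝ → ℝ, ContDiff ℝ (⊤ : ℕ∞) f ∧
      ∀ v : ℝ × ℝ, fderiv ℝ f v (1, 0) = A v ∧ fderiv ℝ f v (0, 1) = B v := by
  have hFd : ∀ v, HasFDerivAt (fPoin A B) (ellP A B v) v := fun v => by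
    have := hasF_fPoin A B hA hB v
    rwa [integral_Fint' A B hA hB hclosed v] at this
  have hfde : fderiv ℝ (fPoin A B) = ellP A B := funext fun v => (hFd v).fderiv
  refine ⟨fPoin A B, ?_, fun v => ?_⟩
  · refine contDiff_infty_iff_fderiv.2 ⟨fun v => (hFd v).differentiableAt, ?_⟩
    rw [hfde]
    exact (hA.smul contDiff_const).add (hB.smul contDiff_const)
  · constructor <;> (rw [hfde]; simp [ellP])

/-! ### Main theorem -/

/-- the first-order Euler–Lagrange expression vanishes identically
in the jet variables iff the Lagrangian is a total divergence: `E(L) = 0` on the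
2-jet space iff there is a smooth `f(x, y)` with
`L = D_x f = ∂_x f + y_x ∂_y f`. -/
theorem euler_lagrange_null_iff_total_divergence (L : ℝ × ℝ × ℝ → ℝ)
    (hL : ContDiff ℝ (⊤ : ℕ∞) L) :
    (∀ x y yx yxx, EL L x y yx yxx = 0) ↔
      ∃ f : ℝ × ℝ → ℝ, ContDiff ℝ (⊤ : ℕ∞) f ∧
        ∀ x y yx, L (x, y, yx) = fderiv ℝ f (x, y) (1, 0) + yx * fderiv ℝ f (x, y) (0, 1) := by
  have hM : ContDiff ℝ (⊤ : ℕ∞) (fun p : ℝ × ℝ × ℝ => fderiv ℝ L p (0, 0, 1)) :=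
    (contDiff_infty_iff_fderiv.1 hL).2.clm_apply contDiff_const
  constructor
  · intro h
    -- the second `y_x`-derivative vanishes
    have key : ∀ p : ℝ × ℝ × ℝ,
        fderiv ℝ (fun p : ℝ × ℝ × ℝ => fderiv ℝ L p (0, 0, 1)) p (0, 0, 1) = 0 := by
      intro p
      have h1 := h p.1 p.2.1 p.2.2 1
      have h0 := h p.1 p.2.1 p.2.2 0
      simp only [EL, pX, pY, pYx] at h1 h0
      linarith
    have hBconst : ∀ x y t : ℝ,
        fderiv ℝ L (x, y, t) (0, 0, 1) = fderiv ℝ L (x, y, 0) (0, 0, 1) :=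
      const_dir _ hM key
    set A : ℝ × ℝ → ℝ := fun v => L (v.1, v.2, 0) with hAdef
    set Bf : ℝ × ℝ → ℝ := fun v => fderiv ℝ L (v.1, v.2, 0) (0, 0, 1) with hBdef
    have hA : ContDiff ℝ (⊤ : ℕ∞) A :=
      hL.comp (contDiff_fst.prodMk (contDiff_snd.prodMk contDiff_const))
    have hB : ContDiff ℝ (⊤ : ℕ∞) Bf :=
      hM.comp (contDiff_fst.prodMk (contDiff_snd.prodMk contDiff_const))
    -- `L` is affine in `y_x`
    have haff : ∀ x y t : ℝ, L (x, y, t) = A (x, y) + t * Bf (x, y) := by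
      intro x y t
      have hc : ∀ s : ℝ, HasDerivAt (fun s : ℝ => (x, y, s)) ((0:ℝ), (0:ℝ), (1:ℝ)) s :=
        fun s => (hasDerivAt_const s x).prodMk ((hasDerivAt_const s y).prodMk (hasDerivAt_id s))
      have hθ : ∀ s : ℝ, HasDerivAt (fun s : ℝ => L (x, y, s) - s * Bf (x, y)) 0 s := by
        intro s
        have h1 : HasDerivAt (fun s : ℝ => L (x, y, s)) (fderiv ℝ L (x, y, s) (0, 0, 1)) s :=
          ((hL.differentiable one_le_inf (x, y, s)).hasFDerivAt).comp_hasDerivAt s (hc s)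
        have h2 := h1.sub (hasDerivAt_mul_const (Bf (x, y)))
        have : fderiv ℝ L (x, y, s) (0, 0, 1) - Bf (x, y) = 0 := by
          rw [hBconst x y s]; simp [hBdef]
        rwa [this] at h2
      have := is_const_of_deriv_eq_zero (fun s => (hθ s).differentiableAt)
        (fun s => (hθ s).deriv) t 0
      simp only [zero_mul, sub_zero] at this
      have hA0 : A (x, y) = L (x, y, 0) := rfl
      linarith [this]
    have hLeq : L = fun p : ℝ × ℝ × ℝ => A (p.1, p.2.1) + p.2.2 * Bf (p.1, p.2.1) :=
      funext fun p => haff p.1 p.2.1 p.2.2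
    have hclosed : ∀ v : ℝ × ℝ, fderiv ℝ A v (0, 1) = fderiv ℝ Bf v (1, 0) := by
      intro v
      obtain ⟨a, b⟩ := v
      have h' := h a b 0 0
      rw [hLeq, EL_form A Bf (hA.differentiable one_le_inf) (hB.differentiable one_le_inf)] at h'
      linarith
    obtain ⟨f, hf, hval⟩ := poincare A Bf hA hB hclosed
    refine ⟨f, hf, fun x y yx => ?_⟩
    rw [(hval (x, y)).1, (hval (x, y)).2]
    exact haff x y yx
  · rintro ⟨f, hf, hrep⟩
    intro x y yx yxx
    have hfd := (contDiff_infty_iff_fderiv.1 hf).2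
    set A : ℝ × ℝ → ℝ := fun v => fderiv ℝ f v (1, 0) with hAdef
    set Bf : ℝ × ℝ → ℝ := fun v => fderiv ℝ f v (0, 1) with hBdef
    have hA : ContDiff ℝ (⊤ : ℕ∞) A := hfd.clm_apply contDiff_const
    have hB : ContDiff ℝ (⊤ : ℕ∞) Bf := hfd.clm_apply contDiff_const
    have hLeq : L = fun p : ℝ × ℝ × ℝ => A (p.1, p.2.1) + p.2.2 * Bf (p.1, p.2.1) :=
      funext fun p => hrep p.1 p.2.1 p.2.2
    rw [hLeq, EL_form A Bf (hA.differentiable one_le_inf) (hB.differentiable one_le_inf)]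
    have hd : Differentiable ℝ (fderiv ℝ f) := hfd.differentiable one_le_inf
    have hdf : ∀ v, HasFDerivAt f (fderiv ℝ f v) v :=
      fun v => (hf.differentiable one_le_inf v).hasFDerivAt
    have hsymm := second_derivative_symmetric hdf ((hd (x, y)).hasFDerivAt)
      ((1:ℝ), (0:ℝ)) ((0:ℝ), (1:ℝ))
    have hAe : fderiv ℝ A (x, y) (0, 1)
        = fderiv ℝ (fderiv ℝ f) (x, y) (0, 1) (1, 0) := by
      have hh : HasFDerivAt A
          ((fderiv ℝ (fderiv ℝ f) (x, y)).flip ((1:ℝ), (0:ℝ))) (x, y) := by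
        have := ((hd (x, y)).hasFDerivAt).clm_apply
          (hasFDerivAt_const ((1:ℝ), (0:ℝ)) ((x, y) : ℝ × ℝ))
        simpa using this
      rw [hh.fderiv]; rfl
    have hBe : fderiv ℝ Bf (x, y) (1, 0)
        = fderiv ℝ (fderiv ℝ f) (x, y) (1, 0) (0, 1) := by
      have hh : HasFDerivAt Bf
          ((fderiv ℝ (fderiv ℝ f) (x, y)).flip ((0:ℝ), (1:ℝ))) (x, y) := by
        have := ((hd (x, y)).hasFDerivAt).clm_apply
          (hasFDerivAt_const ((0:ℝ), (1:ℝ)) ((x, y) : ℝ × ℝ))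
        simpa using this
      rw [hh.fderiv]; rfl
    rw [hAe, hBe, ← hsymm]
    ring
end

section
/- Noether's theorem in one dimension: if Ξ = ξ(x)∂_x + φ(x,y)∂_y is a symmetry of the first-order Lagrangian L(x,y,y_x), i.e., the prolonged Lie derivative pr Ξ(L) + L·ξ'(x) = 0 identically (where pr Ξ = ξ∂_x + φ∂_y + (D_xφ − y_x ξ')∂_{y_x}), then for every solution γ of the Euler–Lagrange equation E(L)(j_2γ) = 0, the current ε(x) := (φ(x,γ) − γ'ξ)·(∂_{y_x}L)(j_1γ) + ξ·L(j_1γ) is constant: dε/dx = 0. -/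
noncomputable def totalDeriv (g : ℝ × ℝ × ℝ → ℝ) (x y yx yxx : ℝ) : ℝ :=
  pX g (x, y, yx) + yx * pY g (x, y, yx) + yxx * pYx g (x, y, yx)

theorem EL_eq_pY_sub_totalDeriv (L : ℝ × ℝ × ℝ → ℝ) (x y yx yxx : ℝ) :
    EL L x y yx yxx = pY L (x, y, yx) - totalDeriv (fun p => pYx L p) x y yx yxx :=
  rfl

/-- `pr Ξ(L) + L·ξ'` for `Ξ = ξ ∂_x + φ ∂_y`. -/
noncomputable def prolongedLieDeriv (L : ℝ × ℝ × ℝ → ℝ) (ξ : ℝ → ℝ) (φ : ℝ × ℝ → ℝ)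
    (x y yx : ℝ) : ℝ :=
  ξ x * pX L (x, y, yx) + φ (x, y) * pY L (x, y, yx)
    + ((fderiv ℝ φ (x, y) (1, 0) + yx * fderiv ℝ φ (x, y) (0, 1))
        - yx * deriv ξ x) * pYx L (x, y, yx)
    + L (x, y, yx) * deriv ξ x

theorem differentiable_pYx {g : ℝ × ℝ × ℝ → ℝ} (hg : ContDiff ℝ 2 g) :
    Differentiable ℝ (fun p => pYx g p) :=
  ((hg.fderiv_right (m := 1) (by norm_num)).clm_apply contDiff_const).differentiable one_ne_zero

section AlongCurve

variable {γ : ℝ → ℝ} {x : ℝ}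

theorem hasDerivAt_comp_graph {φ : ℝ × ℝ → ℝ} (hφ : DifferentiableAt ℝ φ (x, γ x))
    (hγ : DifferentiableAt ℝ γ x) :
    HasDerivAt (fun z => φ (z, γ z))
      (fderiv ℝ φ (x, γ x) (1, 0) + deriv γ x * fderiv ℝ φ (x, γ x) (0, 1)) x := by
  have hgraph : HasDerivAt (fun z => (z, γ z)) (1, deriv γ x) x :=
    (hasDerivAt_id x).prodMk hγ.hasDerivAt
  refine (hφ.hasFDerivAt.comp_hasDerivAt x hgraph).congr_deriv ?_
  have hdir : ((1, deriv γ x) : ℝ × ℝ) = (1, 0) + deriv γ x • (0, 1) := by simp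
  rw [hdir, map_add, map_smul, smul_eq_mul]

theorem hasDerivAt_comp_jet {g : ℝ × ℝ × ℝ → ℝ}
    (hg : DifferentiableAt ℝ g (x, γ x, deriv γ x))
    (hγ : DifferentiableAt ℝ γ x) (hγ' : DifferentiableAt ℝ (deriv γ) x) :
    HasDerivAt (fun z => g (z, γ z, deriv γ z))
      (totalDeriv g x (γ x) (deriv γ x) (deriv (deriv γ) x)) x := by
  have hjet : HasDerivAt (fun z => (z, γ z, deriv γ z)) (1, deriv γ x, deriv (deriv γ) x) x :=
    (hasDerivAt_id x).prodMk (hγ.hasDerivAt.prodMk hγ'.hasDerivAt)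
  refine (hg.hasFDerivAt.comp_hasDerivAt x hjet).congr_deriv ?_
  have hdir : ((1, deriv γ x, deriv (deriv γ) x) : ℝ × ℝ × ℝ)
      = (1, 0, 0) + deriv γ x • (0, 1, 0) + deriv (deriv γ) x • (0, 0, 1) := by simp
  rw [hdir, map_add, map_add, map_smul, map_smul, smul_eq_mul, smul_eq_mul]
  rfl

theorem hasDerivAt_pYx_of_EL_eq_zero {L : ℝ × ℝ × ℝ → ℝ}
    (hL : DifferentiableAt ℝ (fun p => pYx L p) (x, γ x, deriv γ x))
    (hγ : DifferentiableAt ℝ γ x) (hγ' : DifferentiableAt ℝ (deriv γ) x)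
    (hsol : EL L x (γ x) (deriv γ x) (deriv (deriv γ) x) = 0) :
    HasDerivAt (fun z => pYx L (z, γ z, deriv γ z)) (pY L (x, γ x, deriv γ x)) x := by
  rw [EL_eq_pY_sub_totalDeriv, sub_eq_zero] at hsol
  exact hsol ▸ hasDerivAt_comp_jet hL hγ hγ'

theorem hasDerivAt_noetherCurrent {L : ℝ × ℝ × ℝ → ℝ} {ξ : ℝ → ℝ} {φ : ℝ × ℝ → ℝ}
    (hL : DifferentiableAt ℝ L (x, γ x, deriv γ x))
    (hL' : DifferentiableAt ℝ (fun p => pYx L p) (x, γ x, deriv γ x))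
    (hξ : DifferentiableAt ℝ ξ x) (hφ : DifferentiableAt ℝ φ (x, γ x))
    (hγ : DifferentiableAt ℝ γ x) (hγ' : DifferentiableAt ℝ (deriv γ) x)
    (hsol : EL L x (γ x) (deriv γ x) (deriv (deriv γ) x) = 0) :
    HasDerivAt (fun z =>
        (φ (z, γ z) - deriv γ z * ξ z) * pYx L (z, γ z, deriv γ z)
          + ξ z * L (z, γ z, deriv γ z))
      (prolongedLieDeriv L ξ φ x (γ x) (deriv γ x)) x := by
  refine ((((hasDerivAt_comp_graph hφ hγ).sub (hγ'.hasDerivAt.mul hξ.hasDerivAt)).mul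
    (hasDerivAt_pYx_of_EL_eq_zero hL' hγ hγ' hsol)).add
    (hξ.hasDerivAt.mul (hasDerivAt_comp_jet hL hγ hγ'))).congr_deriv ?_
  simp only [prolongedLieDeriv, totalDeriv, Pi.sub_apply, Pi.mul_apply]
  ring

end AlongCurve

/-- Noether's theorem in one dimension (`n = m = 1`).  If
`Ξ = ξ(x)∂_x + φ(x,y)∂_y` is a symmetry of the first-order Lagrangian
`L(x, y, y_x)`, i.e. `pr Ξ(L) + L·ξ'(x) = 0` identically, where
`pr Ξ = ξ∂_x + φ∂_y + (D_x φ − y_x ξ')∂_{y_x}` and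
`D_x φ = ∂_x φ + y_x ∂_y φ`, then along every solution `γ` of the
Euler–Lagrange equation `E(L)(j₂γ) = 0` the Noether current
`ε(x) = (φ(x,γ) − γ'ξ)·(∂_{y_x}L)(j₁γ) + ξ·L(j₁γ)` is constant: `dε/dx = 0`. -/
theorem noether_theorem_one_dimension (L : ℝ × ℝ × ℝ → ℝ)
    (hL : ContDiff ℝ (⊤ : ℕ∞) L)
    (ξ : ℝ → ℝ) (hξ : ContDiff ℝ (⊤ : ℕ∞) ξ)
    (φ : ℝ × ℝ → ℝ) (hφ : ContDiff ℝ (⊤ : ℕ∞) φ)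
    (hsym : ∀ x y yx,
      ξ x * pX L (x, y, yx) + φ (x, y) * pY L (x, y, yx)
        + ((fderiv ℝ φ (x, y) (1, 0) + yx * fderiv ℝ φ (x, y) (0, 1))
            - yx * deriv ξ x) * pYx L (x, y, yx)
        + L (x, y, yx) * deriv ξ x = 0)
    (γ : ℝ → ℝ) (hγ : ContDiff ℝ (⊤ : ℕ∞) γ)
    (hsol : ∀ x, EL L x (γ x) (deriv γ x) (deriv (deriv γ) x) = 0) (x : ℝ) :
    deriv (fun z =>
      (φ (z, γ z) - deriv γ z * ξ z) * pYx L (z, γ z, deriv γ z)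
        + ξ z * L (z, γ z, deriv γ z)) x = 0 := by
  have hγ' : ContDiff ℝ (⊤ : ℕ∞) (deriv γ) := (contDiff_infty_iff_deriv.mp hγ).2
  have hε := hasDerivAt_noetherCurrent (hL.differentiable (by simp) _)
    (differentiable_pYx (hL.of_le (WithTop.coe_le_coe.mpr le_top)) _) (hξ.differentiable (by simp) x)
    (hφ.differentiable (by simp) _) (hγ.differentiable (by simp) x)
    (hγ'.differentiable (by simp) x) (hsol x)
  exact hε.deriv.trans (hsym x (γ x) (deriv γ x))
end
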